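/- arXiv:math/0309005 — 3 statements merged into one kernel-verified Lean document; each statement's English description precedes it below -/
import Mathlib

section
/- For positive reals x, y and n ≥ 3, if θ is the angle opposite the side of length z = (x^n + y^n)^(1/n) in a triangle with sides x, y, z, then cos θ > 0; equivalently, defining cos θ = (x^2 + y^2 - z^2)/(2xy), this quantity is positive. -/
theorem stmt_4 (x y : ℝ) (hx : 0 < x) (hy : 0 < y) (n : ℕ) (hn : 3 ≤ n) :
    0 < (x ^ 2 + y ^ 2 - ((x ^ n + y ^ n) ^ ((1 : ℝ) / n)) ^ 2) / (2 * x * y) := by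
  have hn0 : (0:ℝ) < n := by positivity
  set s : ℝ := x ^ 2 + y ^ 2 with hs
  have hspos : 0 < s := by positivity
  have hxs : x ^ 2 < s := by nlinarith
  have hys : y ^ 2 < s := by nlinarith
  have hexp : (0:ℝ) < ((n:ℝ) - 2) / 2 := by
    have : (3:ℝ) ≤ n := by exact_mod_cast hn
    linarith
  -- x ^ n = x^2 * (x^2) ^ ((n-2)/2)
  have key : ∀ a : ℝ, 0 < a → a ^ 2 < s → (a : ℝ) ^ n < a ^ 2 * s ^ (((n:ℝ) - 2) / 2) := by
    intro a ha has
    have h1 : (a ^ 2 : ℝ) ^ (((n:ℝ) - 2) / 2) < s ^ (((n:ℝ) - 2) / 2) :=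
      Real.rpow_lt_rpow (by positivity) has hexp
    have h2 : (a ^ 2 : ℝ) ^ (((n:ℝ) - 2) / 2) = a ^ (n - 2 : ℕ) := by
      rw [← Real.rpow_natCast a 2, ← Real.rpow_mul ha.le, ← Real.rpow_natCast a (n-2)]
      congr 1
      have : ((n - 2 : ℕ) : ℝ) = (n:ℝ) - 2 := by
        have : (2:ℕ) ≤ n := by omega
        push_cast [Nat.cast_sub this]; ring
      rw [this]; ring
    have h3 : a ^ n = a ^ 2 * a ^ (n - 2 : ℕ) := by
      rw [← pow_add]; congr 1; omega
    rw [h3]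
    have := mul_lt_mul_of_pos_left (h2 ▸ h1) (by positivity : (0:ℝ) < a ^ 2)
    linarith
  have hsum : x ^ n + y ^ n < s ^ ((n:ℝ) / 2) := by
    have hx' := key x hx hxs
    have hy' := key y hy hys
    have : s ^ ((n:ℝ) / 2) = s * s ^ (((n:ℝ) - 2) / 2) := by
      nth_rewrite 2 [← Real.rpow_one s]
      rw [← Real.rpow_add hspos]
      congr 1; ring
    rw [this, hs]
    nlinarith [hx', hy']
  have hz : ((x ^ n + y ^ n) ^ ((1 : ℝ) / n)) ^ 2 < s := by
    have hb : (0:ℝ) ≤ x ^ n + y ^ n := by positivity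
    have h4 : ((x ^ n + y ^ n) ^ ((1 : ℝ) / n)) ^ 2
        = (x ^ n + y ^ n) ^ ((2:ℝ) / n) := by
      rw [← Real.rpow_natCast ((x ^ n + y ^ n) ^ ((1:ℝ)/n)) 2, ← Real.rpow_mul hb]
      congr 1; push_cast; ring
    have h5 : (x ^ n + y ^ n) ^ ((2:ℝ) / n) < (s ^ ((n:ℝ)/2)) ^ ((2:ℝ)/n) :=
      Real.rpow_lt_rpow hb hsum (by positivity)
    have h6 : (s ^ ((n:ℝ)/2)) ^ ((2:ℝ)/n) = s := by
      rw [← Real.rpow_mul hspos.le]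
      rw [show (n:ℝ)/2 * (2/n) = 1 by field_simp]
      exact Real.rpow_one s
    rw [h4]; rw [h6] at h5; exact h5
  have : 0 < s - ((x ^ n + y ^ n) ^ ((1 : ℝ) / n)) ^ 2 := by linarith
  exact div_pos this (by positivity)
end

section
/- For positive reals x, y and n ≥ 3, the sides x, y, z = (x^n + y^n)^(1/n) satisfy the strict triangle inequalities: z < x + y, x < y + z, and y < x + z. -/
theorem stmt_5 (x y : ℝ) (hx : 0 < x) (hy : 0 < y) (n : ℕ) (hn : 3 ≤ n) :
    (x ^ n + y ^ n) ^ ((1 : ℝ) / n) < x + y ∧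
    x < y + (x ^ n + y ^ n) ^ ((1 : ℝ) / n) ∧
    y < x + (x ^ n + y ^ n) ^ ((1 : ℝ) / n) := by
  have hn0 : n ≠ 0 := by omega
  have hinv : (0:ℝ) < 1 / n := by positivity
  have hxy : (0:ℝ) < x + y := by linarith
  -- x^n + y^n < (x+y)^n
  have h1 : x ^ n + y ^ n < (x + y) ^ n := by
    have hx' : x ^ n < x * (x + y) ^ (n - 1) := by
      calc x ^ n = x * x ^ (n - 1) := by
            rw [← pow_succ']; congr 1; omega
        _ < x * (x + y) ^ (n - 1) := by
            apply mul_lt_mul_of_pos_left _ hx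
            exact pow_lt_pow_left₀ (by linarith) hx.le (by omega)
    have hy' : y ^ n < y * (x + y) ^ (n - 1) := by
      calc y ^ n = y * y ^ (n - 1) := by
            rw [← pow_succ']; congr 1; omega
        _ < y * (x + y) ^ (n - 1) := by
            apply mul_lt_mul_of_pos_left _ hy
            exact pow_lt_pow_left₀ (by linarith) hy.le (by omega)
    calc x ^ n + y ^ n < x * (x + y) ^ (n - 1) + y * (x + y) ^ (n - 1) := by linarith
      _ = (x + y) ^ n := by
          rw [← add_mul, ← pow_succ']; congr 1; omega
  have key : ∀ a : ℝ, 0 < a → a < (x ^ n + y ^ n) ^ ((1 : ℝ) / n) →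
      True := fun _ _ _ => trivial
  have hxz : x < (x ^ n + y ^ n) ^ ((1 : ℝ) / n) := by
    have : x ^ n < x ^ n + y ^ n := by nlinarith [pow_pos hy n]
    calc x = (x ^ n) ^ ((1:ℝ) / n) := by
          rw [one_div, Real.pow_rpow_inv_natCast hx.le hn0]
      _ < (x ^ n + y ^ n) ^ ((1:ℝ) / n) :=
          Real.rpow_lt_rpow (by positivity) this hinv
  have hyz : y < (x ^ n + y ^ n) ^ ((1 : ℝ) / n) := by
    have : y ^ n < x ^ n + y ^ n := by nlinarith [pow_pos hx n]
    calc y = (y ^ n) ^ ((1:ℝ) / n) := by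
          rw [one_div, Real.pow_rpow_inv_natCast hy.le hn0]
      _ < (x ^ n + y ^ n) ^ ((1:ℝ) / n) :=
          Real.rpow_lt_rpow (by positivity) this hinv
  refine ⟨?_, by linarith, by linarith⟩
  calc (x ^ n + y ^ n) ^ ((1:ℝ) / n) < ((x + y) ^ n) ^ ((1:ℝ) / n) :=
        Real.rpow_lt_rpow (by positivity) h1 hinv
    _ = x + y := by rw [one_div, Real.pow_rpow_inv_natCast hxy.le hn0]
end

section
/- For positive integers x, y, z and n ≥ 3, if x^n + y^n = z^n then the triangle with sides x, y, z is acute at the angle opposite z, i.e., x^2 + y^2 > z^2. -/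
theorem stmt_12 (x y z n : ℕ) (hx : 0 < x) (hy : 0 < y) (hz : 0 < z) (hn : 3 ≤ n)
    (h : x ^ n + y ^ n = z ^ n) : x ^ 2 + y ^ 2 > z ^ 2 := by
  have hn0 : n ≠ 0 := by omega
  have hxz : x < z := by
    have h1 : x ^ n < z ^ n := by
      have := pow_pos hy n; omega
    exact (Nat.pow_lt_pow_iff_left hn0).mp h1
  have hyz : y < z := by
    have h1 : y ^ n < z ^ n := by
      have := pow_pos hx n; omega
    exact (Nat.pow_lt_pow_iff_left hn0).mp h1
  have hsplit : ∀ a : ℕ, a ^ n = a ^ 2 * a ^ (n - 2) := by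
    intro a
    rw [← pow_add]
    congr 1
    omega
  have hxp : x ^ (n - 2) < z ^ (n - 2) :=
    Nat.pow_lt_pow_left hxz (by omega)
  have hyp : y ^ (n - 2) < z ^ (n - 2) :=
    Nat.pow_lt_pow_left hyz (by omega)
  have key : z ^ 2 * z ^ (n - 2) < (x ^ 2 + y ^ 2) * z ^ (n - 2) := by
    rw [← hsplit, ← h, add_mul, hsplit x, hsplit y]
    have h1 : x ^ 2 * x ^ (n - 2) < x ^ 2 * z ^ (n - 2) :=
      (Nat.mul_lt_mul_left (pow_pos hx 2)).mpr hxp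
    have h2 : y ^ 2 * y ^ (n - 2) < y ^ 2 * z ^ (n - 2) :=
      (Nat.mul_lt_mul_left (pow_pos hy 2)).mpr hyp
    omega
  exact Nat.lt_of_mul_lt_mul_right key
end
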